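/- Let n ≥ 2, let w ∈ S̃_n^∘, and let u (minimal) and t ∈ ℕ^{n−1} be the unique pair with ẇ_i = i·t_i + u̇_i for all i. Fix 1 ≤ i ≤ n−1 and let j be the largest natural number such that w(i + 1) > w(i + jn) (such a maximal j ≥ 0 exists, since w(i) < w(i+1) and w(i + jn) → ∞ as j → ∞). Then t_i = #{q ∈ ℤ : i + 1 ≤ qn < i + jn}. -/

import Mathlib

open scoped BigOperators

/-- An affine permutation of size `n`: a bijection `ℤ → ℤ` with `w(i+n) = w(i)+n`
and `w(1) + ⋯ + w(n) = n(n+1)/2`. -/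
structure AffinePerm (n : ℕ) where
  toFun : ℤ → ℤ
  bijective : Function.Bijective toFun
  shift : ∀ i : ℤ, toFun (i + n) = toFun i + n
  sum_base : 2 * ∑ i ∈ Finset.Icc (1 : ℤ) (n : ℤ), toFun i = n * (n + 1)

namespace AffinePerm

variable {n k : ℕ}

/-- Coxeter length: number of inversions `(i,j)` with `1 ≤ i ≤ n`, `i < j`, `w(i) > w(j)`. -/
noncomputable def len (w : AffinePerm n) : ℕ :=
  Set.ncard {ij : ℤ × ℤ | 1 ≤ ij.1 ∧ ij.1 ≤ (n : ℤ) ∧ ij.1 < ij.2 ∧ w.toFun ij.2 < w.toFun ij.1}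

/-- `w` contains the pattern `p`. -/
def Contains (w : AffinePerm n) (p : Equiv.Perm (Fin k)) : Prop :=
  ∃ f : Fin k → ℤ, StrictMono f ∧ ∀ a b : Fin k, w.toFun (f a) < w.toFun (f b) ↔ p a < p b

/-- Minimal length coset representative: `w(1) < w(2) < ⋯ < w(n)`. -/
def IsMLCR (w : AffinePerm n) : Prop :=
  ∀ i : ℤ, 1 ≤ i → i < (n : ℤ) → w.toFun i < w.toFun (i + 1)

/-- `m` is a bead of the abacus of `w`. -/
def IsBead (w : AffinePerm n) (m : ℤ) : Prop :=
  ∃ j : ℤ, 1 ≤ j ∧ j ≤ (n : ℤ) ∧ ∃ q : ℕ, m = w.toFun j - (q : ℤ) * n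

/-- `i`-th entry of the gap vector: number of gaps strictly between `w(i)` and `w(i+1)`. -/
noncomputable def gapVec (w : AffinePerm n) (i : ℕ) : ℕ :=
  Set.ncard {m : ℤ | w.toFun (i : ℤ) < m ∧ m < w.toFun ((i : ℤ) + 1) ∧ ¬ w.IsBead m}

/-- Minimal abacus condition: `w(j+1) − w(j) ∈ {1, …, n−1}` for `1 ≤ j ≤ n−1`. -/
def IsMinimal (w : AffinePerm n) : Prop :=
  ∀ j : ℤ, 1 ≤ j → j ≤ (n : ℤ) - 1 →
    1 ≤ w.toFun (j + 1) - w.toFun j ∧ w.toFun (j + 1) - w.toFun j ≤ (n : ℤ) - 1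

/-- `π` is the strand assignment of the instance `f` of a pattern in `w`:
`π a = j` where `w (f a)` differs by a multiple of `n` from the `j`-th smallest
base-window value. -/
def IsStrandOf (w : AffinePerm n) (f : Fin k → ℤ) (π : Fin k → ℕ) : Prop :=
  ∀ a : Fin k, ∃ r : ℤ, 1 ≤ r ∧ r ≤ (n : ℤ) ∧
    Set.ncard {s : ℤ | 1 ≤ s ∧ s ≤ (n : ℤ) ∧ w.toFun s ≤ w.toFun r} = π a ∧
    (n : ℤ) ∣ (w.toFun (f a) - w.toFun r)

/-- `w` contains an instance of `p` whose strand assignment is `π`. -/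
def ContainsWithStrand (w : AffinePerm n) (p : Equiv.Perm (Fin k)) (π : Fin k → ℕ) : Prop :=
  ∃ f : Fin k → ℤ, StrictMono f ∧ (∀ a b : Fin k, w.toFun (f a) < w.toFun (f b) ↔ p a < p b) ∧
    w.IsStrandOf f π

end AffinePerm

namespace AffinePerm

variable {n : ℕ}

lemma shift_mul (w : AffinePerm n) (x : ℤ) (q : ℤ) :
    w.toFun (x + q * n) = w.toFun x + q * n := by
  induction q using Int.induction_on with
  | zero => simp
  | succ k ih =>
      have h : x + ((k : ℤ) + 1) * n = (x + k * n) + n := by ring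
      rw [h, w.shift, ih]; ring
  | pred k ih =>
      have h : (x + (-(k : ℤ) - 1) * n) + n = x + (-(k : ℤ)) * n := by ring
      have h2 := w.shift (x + (-(k : ℤ) - 1) * n)
      rw [h, ih] at h2
      linarith

lemma mono_window (w : AffinePerm n) (hw : w.IsMLCR) (r s : ℤ)
    (hr : 1 ≤ r) (hs : s ≤ (n : ℤ)) (hrs : r ≤ s) : w.toFun r ≤ w.toFun s := by
  have key : ∀ k : ℕ, ∀ s' : ℤ, 1 ≤ s' → s' + k ≤ (n : ℤ) →
      w.toFun s' ≤ w.toFun (s' + k) := by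
    intro k
    induction k with
    | zero => intro s' _ _; simp
    | succ k ih =>
        intro s' h1 h2
        have hlt : w.toFun (s' + k) < w.toFun (s' + k + 1) :=
          hw (s' + k) (by omega) (by push_cast at h2 ⊢; omega)
        have := ih s' h1 (by push_cast at h2 ⊢; omega)
        have he : s' + ((k : ℤ) + 1) = s' + k + 1 := by ring
        push_cast
        rw [he]
        exact le_trans this (le_of_lt hlt)
  have h := key (s - r).toNat r hr (by omega)
  rwa [Int.toNat_of_nonneg (by omega), show r + (s - r) = s by ring] at h

lemma resid_exists (w : AffinePerm n) (hn : 0 < n) (m : ℤ) :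
    ∃ r : ℤ, 1 ≤ r ∧ r ≤ (n : ℤ) ∧ (n : ℤ) ∣ (m - w.toFun r) := by
  obtain ⟨x, hx⟩ := w.bijective.surjective m
  have hnz : (n : ℤ) ≠ 0 := by exact_mod_cast hn.ne'
  have hnpos : (0 : ℤ) < n := by exact_mod_cast hn
  refine ⟨(x - 1) % n + 1, ?_, ?_, ?_⟩
  · have := Int.emod_nonneg (x - 1) hnz; omega
  · have := Int.emod_lt_of_pos (x - 1) hnpos; omega
  · have hx2 : x = ((x - 1) % n + 1) + ((x - 1) / n) * n := by
      have h := Int.emod_add_mul_ediv (x - 1) n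
      have h2 : (n : ℤ) * ((x - 1) / n) = ((x - 1) / n) * n := mul_comm _ _
      omega
    have := w.shift_mul ((x - 1) % n + 1) ((x - 1) / n)
    rw [← hx2, hx] at this
    exact ⟨(x - 1) / n, by rw [this]; ring⟩

lemma resid_unique (w : AffinePerm n) (r₁ r₂ : ℤ)
    (h1 : 1 ≤ r₁) (h2 : r₁ ≤ (n : ℤ)) (h3 : 1 ≤ r₂) (h4 : r₂ ≤ (n : ℤ))
    (hd : (n : ℤ) ∣ (w.toFun r₁ - w.toFun r₂)) : r₁ = r₂ := by
  obtain ⟨q, hq⟩ := hd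
  have key : w.toFun r₁ = w.toFun (r₂ + q * n) := by
    rw [w.shift_mul]; linarith [hq]
  have := w.bijective.injective key
  have hq0 : q = 0 := by
    by_contra hq0
    rcases lt_or_gt_of_ne hq0 with h | h
    · have : q * (n : ℤ) ≤ -1 * n := by
        apply mul_le_mul_of_nonneg_right (by omega) (by positivity)
      omega
    · have : 1 * (n : ℤ) ≤ q * n := by
        apply mul_le_mul_of_nonneg_right (by omega) (by positivity)
      omega
  rw [hq0] at this
  simpa using this

lemma resid_set_eq (hn : 0 < n) (a b c : ℤ) :
    {m : ℤ | a < m ∧ m < b ∧ (n : ℤ) ∣ (m - c)} =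
      ↑((Finset.Icc ((a - c) / n + 1) ((b - 1 - c) / n)).image (fun q => c + q * n)) := by
  have hnpos : (0 : ℤ) < n := by exact_mod_cast hn
  ext m
  simp only [Finset.coe_image, Set.mem_image, Finset.mem_coe, Finset.mem_Icc, Set.mem_setOf_eq]
  constructor
  · rintro ⟨h1, h2, q, hq⟩
    have hcomm : q * (n : ℤ) = (n : ℤ) * q := mul_comm _ _
    refine ⟨q, ⟨?_, ?_⟩, by omega⟩
    · have : (a - c) / n < q := by
        rw [Int.ediv_lt_iff_lt_mul hnpos]; omega
      omega
    · rw [Int.le_ediv_iff_mul_le hnpos]; omega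
  · rintro ⟨q, ⟨hq1, hq2⟩, rfl⟩
    have hcomm : q * (n : ℤ) = (n : ℤ) * q := mul_comm _ _
    have h1 : (a - c) / n < q := by omega
    rw [Int.ediv_lt_iff_lt_mul hnpos] at h1
    rw [Int.le_ediv_iff_mul_le hnpos] at hq2
    exact ⟨by omega, by omega, ⟨q, by omega⟩⟩

lemma resid_ncard (hn : 0 < n) (a b c : ℤ) :
    Set.ncard {m : ℤ | a < m ∧ m < b ∧ (n : ℤ) ∣ (m - c)} =
      ((b - 1 - c) / n - (a - c) / n).toNat := by
  rw [resid_set_eq hn a b c, Set.ncard_coe_finset]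
  rw [Finset.card_image_of_injective _ (fun q1 q2 h => by
    have h2 : q1 * (n : ℤ) = q2 * n := by omega
    exact mul_right_cancel₀ (by exact_mod_cast hn.ne') h2)]
  rw [Int.card_Icc]
  congr 1
  ring

lemma ediv_diff_lower (hn : 0 < n) (a d : ℤ) (hd : 1 ≤ d) :
    (d - 1) / n ≤ (a + d - 1) / n - a / n := by
  have hnpos : (0 : ℤ) < n := by exact_mod_cast hn
  have hmod := Int.emod_add_mul_ediv (d - 1) n
  have hm1 := Int.emod_nonneg (d - 1) hnpos.ne'
  have hm2 := Int.emod_lt_of_pos (d - 1) hnpos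
  have hcomm : (n : ℤ) * ((d - 1) / n) = ((d - 1) / n) * n := mul_comm _ _
  have hle : a + ((d - 1) / n) * n ≤ a + d - 1 := by omega
  have h1 : (a + ((d - 1) / n) * n) / n ≤ (a + d - 1) / n := Int.ediv_le_ediv hnpos hle
  rw [Int.add_mul_ediv_right a ((d - 1) / n) hnpos.ne'] at h1
  omega

lemma ediv_diff_upper (hn : 0 < n) (a d : ℤ) (hd : 1 ≤ d) :
    (a + d - 1) / n - a / n ≤ (d - 1) / n + 1 := by
  have hnpos : (0 : ℤ) < n := by exact_mod_cast hn
  have hmod := Int.emod_add_mul_ediv (d - 1) n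
  have hm1 := Int.emod_nonneg (d - 1) hnpos.ne'
  have hm2 := Int.emod_lt_of_pos (d - 1) hnpos
  have hcomm : (n : ℤ) * ((d - 1) / n) = ((d - 1) / n) * n := mul_comm _ _
  have hcomm2 : ((d - 1) / n + 1) * n = ((d - 1) / n) * n + n := by ring
  have hle : a + d - 1 ≤ (a - 1) + ((d - 1) / n + 1) * n := by omega
  have h1 : (a + d - 1) / n ≤ ((a - 1) + ((d - 1) / n + 1) * n) / n :=
    Int.ediv_le_ediv hnpos hle
  rw [Int.add_mul_ediv_right (a - 1) ((d - 1) / n + 1) hnpos.ne'] at h1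
  have h2 : (a - 1) / n ≤ a / n := Int.ediv_le_ediv hnpos (by omega)
  omega

lemma gapVec_eq_sum (w : AffinePerm n) (hw : w.IsMLCR) (hn : 2 ≤ n) (i : ℕ)
    (hi1 : 1 ≤ i) (hi2 : i ≤ n - 1) :
    (w.gapVec i : ℤ) = ∑ r ∈ Finset.Icc (1 : ℤ) (i : ℤ),
      ((w.toFun ((i : ℤ) + 1) - 1 - w.toFun r) / n - (w.toFun (i : ℤ) - w.toFun r) / n) := by
  have hn0 : 0 < n := by omega
  have hnpos : (0 : ℤ) < n := by exact_mod_cast hn0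
  have hiZ : (1 : ℤ) ≤ (i : ℤ) := by exact_mod_cast hi1
  have hiN : (i : ℤ) + 1 ≤ (n : ℤ) := by
    have h : i + 1 ≤ n := by omega
    exact_mod_cast h
  set A := w.toFun (i : ℤ) with hA
  set B := w.toFun ((i : ℤ) + 1) with hB
  have hAB : A < B := hw i hiZ (by omega)
  set F : ℤ → Finset ℤ := fun r =>
    (Finset.Icc ((A - w.toFun r) / n + 1) ((B - 1 - w.toFun r) / n)).image
      (fun q => w.toFun r + q * n) with hF
  have hFr : ∀ r m : ℤ, m ∈ F r ↔ (A < m ∧ m < B ∧ (n : ℤ) ∣ (m - w.toFun r)) := by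
    intro r m
    have h := resid_set_eq (n := n) hn0 A B (w.toFun r)
    rw [Set.ext_iff] at h
    have h2 := h m
    simp only [hF, Finset.mem_image, Finset.mem_Icc]
    simpa using h2.symm
  have hiff : ∀ m : ℤ, (A < m ∧ m < B ∧ ¬ w.IsBead m) ↔
      ∃ r ∈ Finset.Icc (1 : ℤ) (i : ℤ), m ∈ F r := by
    intro m
    constructor
    · rintro ⟨h1, h2, h3⟩
      obtain ⟨r, hr1, hr2, hr3⟩ := w.resid_exists hn0 m
      refine ⟨r, Finset.mem_Icc.mpr ⟨hr1, ?_⟩, (hFr r m).mpr ⟨h1, h2, hr3⟩⟩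
      by_contra hri
      push_neg at hri
      have hwr : B ≤ w.toFun r := w.mono_window hw ((i : ℤ) + 1) r (by omega) hr2 (by omega)
      obtain ⟨q, hq⟩ := hr3
      have hq1 : q ≤ -1 := by
        by_contra hq1
        push_neg at hq1
        have : 0 ≤ (n : ℤ) * q := mul_nonneg hnpos.le (by omega)
        omega
      refine absurd ?_ h3
      refine ⟨r, hr1, hr2, (-q).toNat, ?_⟩
      have ht : ((-q).toNat : ℤ) = -q := Int.toNat_of_nonneg (by omega)
      have hcomm : ((-q).toNat : ℤ) * (n : ℤ) = (n : ℤ) * ((-q).toNat : ℤ) := mul_comm _ _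
      have hkey : (n : ℤ) * (((-q).toNat : ℤ)) = -((n : ℤ) * q) := by rw [ht]; ring
      omega
    · rintro ⟨r, hr, hm⟩
      rw [Finset.mem_Icc] at hr
      obtain ⟨h1, h2, hdvd⟩ := (hFr r m).mp hm
      refine ⟨h1, h2, ?_⟩
      rintro ⟨r', hr'1, hr'2, q', hq'⟩
      have hd2 : (n : ℤ) ∣ (m - w.toFun r') := ⟨-(q' : ℤ), by rw [hq']; ring⟩
      have hd3 : (n : ℤ) ∣ (w.toFun r - w.toFun r') := by
        have := dvd_sub hd2 hdvd
        have he : (m - w.toFun r') - (m - w.toFun r) = w.toFun r - w.toFun r' := by ring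
        rwa [he] at this
      have hrr : r = r' := w.resid_unique r r' hr.1 (by omega) hr'1 hr'2 hd3
      have hwr : w.toFun r ≤ A := w.mono_window hw r (i : ℤ) hr.1 (by omega) hr.2
      have hq'n : 0 ≤ (q' : ℤ) * n := mul_nonneg (by positivity) hnpos.le
      have hfeq : w.toFun r = w.toFun r' := by rw [hrr]
      omega
  have hco : {m : ℤ | A < m ∧ m < B ∧ ¬ w.IsBead m} =
      ↑((Finset.Icc (1 : ℤ) (i : ℤ)).biUnion F) := by
    ext m
    simp only [Set.mem_setOf_eq, Finset.mem_coe, Finset.mem_biUnion]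
    exact hiff m
  have hcard : w.gapVec i = ((Finset.Icc (1 : ℤ) (i : ℤ)).biUnion F).card := by
    show Set.ncard _ = _
    rw [show {m : ℤ | w.toFun (i : ℤ) < m ∧ m < w.toFun ((i : ℤ) + 1) ∧ ¬ w.IsBead m}
        = {m : ℤ | A < m ∧ m < B ∧ ¬ w.IsBead m} from rfl, hco, Set.ncard_coe_finset]
  have hdisj : ∀ r ∈ Finset.Icc (1 : ℤ) (i : ℤ), ∀ r' ∈ Finset.Icc (1 : ℤ) (i : ℤ),
      r ≠ r' → Disjoint (F r) (F r') := by
    intro r hr r' hr' hne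
    rw [Finset.mem_Icc] at hr hr'
    rw [Finset.disjoint_left]
    intro m hm hm'
    obtain ⟨_, _, hd1⟩ := (hFr r m).mp hm
    obtain ⟨_, _, hd2⟩ := (hFr r' m).mp hm'
    have hd3 : (n : ℤ) ∣ (w.toFun r - w.toFun r') := by
      have := dvd_sub hd2 hd1
      have he : (m - w.toFun r') - (m - w.toFun r) = w.toFun r - w.toFun r' := by ring
      rwa [he] at this
    exact hne (w.resid_unique r r' hr.1 (by omega) hr'.1 (by omega) hd3)
  have hFcard : ∀ r : ℤ, (F r).card =
      ((B - 1 - w.toFun r) / n - (A - w.toFun r) / n).toNat := by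
    intro r
    rw [hF]
    rw [Finset.card_image_of_injective _ (fun q1 q2 h => by
      have h2 : q1 * (n : ℤ) = q2 * n := by omega
      exact mul_right_cancel₀ (by exact_mod_cast hn0.ne') h2)]
    rw [Int.card_Icc]
    congr 1
    ring
  rw [hcard, Finset.card_biUnion hdisj, Nat.cast_sum]
  apply Finset.sum_congr rfl
  intro r _
  rw [hFcard r, Int.toNat_of_nonneg (sub_nonneg.mpr (Int.ediv_le_ediv hnpos (by omega)))]

lemma gapVec_bounds (w : AffinePerm n) (hw : w.IsMLCR) (hn : 2 ≤ n) (i : ℕ)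
    (hi1 : 1 ≤ i) (hi2 : i ≤ n - 1) :
    (i : ℤ) * ((w.toFun ((i : ℤ) + 1) - w.toFun (i : ℤ) - 1) / n) ≤ (w.gapVec i : ℤ) ∧
    (w.gapVec i : ℤ) < (i : ℤ) * ((w.toFun ((i : ℤ) + 1) - w.toFun (i : ℤ) - 1) / n) + i := by
  have hn0 : 0 < n := by omega
  have hnpos : (0 : ℤ) < n := by exact_mod_cast hn0
  have hiZ : (1 : ℤ) ≤ (i : ℤ) := by exact_mod_cast hi1
  have hiltn : (i : ℤ) < (n : ℤ) := by
    have h : i < n := by omega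
    exact_mod_cast h
  have hAB : w.toFun (i : ℤ) < w.toFun ((i : ℤ) + 1) := hw i hiZ hiltn
  set d := w.toFun ((i : ℤ) + 1) - w.toFun (i : ℤ) with hd
  have hd1 : 1 ≤ d := by omega
  have hterm_low : ∀ r : ℤ, (d - 1) / n ≤
      (w.toFun ((i : ℤ) + 1) - 1 - w.toFun r) / n - (w.toFun (i : ℤ) - w.toFun r) / n := by
    intro r
    have h := ediv_diff_lower (n := n) hn0 (w.toFun (i : ℤ) - w.toFun r) d hd1
    rwa [show w.toFun (i : ℤ) - w.toFun r + d - 1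
        = w.toFun ((i : ℤ) + 1) - 1 - w.toFun r by omega] at h
  have hterm_up : ∀ r : ℤ,
      (w.toFun ((i : ℤ) + 1) - 1 - w.toFun r) / n - (w.toFun (i : ℤ) - w.toFun r) / n
        ≤ (d - 1) / n + 1 := by
    intro r
    have h := ediv_diff_upper (n := n) hn0 (w.toFun (i : ℤ) - w.toFun r) d hd1
    rwa [show w.toFun (i : ℤ) - w.toFun r + d - 1
        = w.toFun ((i : ℤ) + 1) - 1 - w.toFun r by omega] at h
  have hterm_i : (w.toFun ((i : ℤ) + 1) - 1 - w.toFun (i : ℤ)) / (n : ℤ)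
      - (w.toFun (i : ℤ) - w.toFun (i : ℤ)) / (n : ℤ) = (d - 1) / n := by
    rw [show w.toFun ((i : ℤ) + 1) - 1 - w.toFun (i : ℤ) = d - 1 by omega,
      sub_self, Int.zero_ediv, sub_zero]
  rw [gapVec_eq_sum w hw hn i hi1 hi2]
  have hcard1 : ((Finset.Icc (1 : ℤ) (i : ℤ)).card : ℤ) = (i : ℤ) := by
    rw [Int.card_Icc]; omega
  constructor
  · have h := Finset.card_nsmul_le_sum (Finset.Icc (1 : ℤ) (i : ℤ)) _ ((d - 1) / n)
      (fun r _ => hterm_low r)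
    rw [nsmul_eq_mul, hcard1] at h
    exact h
  · have hsplit : Finset.Icc (1 : ℤ) (i : ℤ) = insert (i : ℤ) (Finset.Icc (1 : ℤ) ((i : ℤ) - 1)) := by
      ext x; simp only [Finset.mem_Icc, Finset.mem_insert]; omega
    rw [hsplit, Finset.sum_insert (by simp only [Finset.mem_Icc]; omega)]
    have h2 := Finset.sum_le_card_nsmul (Finset.Icc (1 : ℤ) ((i : ℤ) - 1)) _ ((d - 1) / n + 1)
      (fun r _ => hterm_up r)
    have hcard2 : ((Finset.Icc (1 : ℤ) ((i : ℤ) - 1)).card : ℤ) = (i : ℤ) - 1 := by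
      rw [Int.card_Icc]; omega
    rw [nsmul_eq_mul, hcard2] at h2
    rw [hterm_i]
    have hring : (i : ℤ) * ((d - 1) / n) + i = (d - 1) / n + (((i : ℤ) - 1) * ((d - 1) / n + 1)) + 1 := by
      ring
    omega

end AffinePerm


/-- Periodic extension `ṽ : ℤ → ℤ` of a permutation `v` of `{1,…,n}`
(realized as `Equiv.Perm (Fin n)` via the shift by one). -/
def periodicExt (n : ℕ) (v : Equiv.Perm (Fin n)) (i : ℤ) : ℤ :=
  if h : 0 < n then
    ((v ⟨((i - 1) % (n : ℤ)).toNat, by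
        have hn : (0 : ℤ) < (n : ℤ) := by exact_mod_cast h
        have h1 := Int.emod_nonneg (i - 1) (ne_of_gt hn)
        have h2 := Int.emod_lt_of_pos (i - 1) hn
        omega⟩ : Fin n).1 : ℤ) + 1 + (n : ℤ) * ((i - 1) / (n : ℤ))
  else i

/-- Number of inversions of a finite permutation. -/
def permInv {n : ℕ} (v : Equiv.Perm (Fin n)) : ℕ :=
  (Finset.univ.filter fun ab : Fin n × Fin n => ab.1 < ab.2 ∧ v ab.2 < v ab.1).card

/-- A sequence of naturals is eventually periodic. -/
def EventuallyPeriodic (A : ℕ → ℕ) : Prop :=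
  ∃ N d : ℕ, 0 < d ∧ ∀ m : ℕ, N ≤ m → A (m + d) = A m

/-- `w` is the unique element of `S̃₃^∘` with gap vector `(t₁, 2·t₂)`. -/
def IsW3 (t : ℕ × ℕ) (w : AffinePerm 3) : Prop :=
  w.IsMLCR ∧ w.gapVec 1 = t.1 ∧ w.gapVec 2 = 2 * t.2

/-- `t ∈ S(p, π)`: `w_t` contains an instance of `p` with strand assignment `π`. -/
def MemS {k : ℕ} (p : Equiv.Perm (Fin k)) (π : Fin k → ℕ) (t : ℕ × ℕ) : Prop :=
  ∃ w : AffinePerm 3, IsW3 t w ∧ w.ContainsWithStrand p π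

/-- Two strand-2 indices are linked below. -/
def LinkedBelow {k : ℕ} (p : Equiv.Perm (Fin k)) (π : Fin k → ℕ) (a b : Fin k) : Prop :=
  π a = 2 ∧ π b = 2 ∧ ∃ r : Fin k, π r = 1 ∧ max a b < r ∧ p r < min (p a) (p b)

/-- Two strand-2 indices are linked above. -/
def LinkedAbove {k : ℕ} (p : Equiv.Perm (Fin k)) (π : Fin k → ℕ) (a b : Fin k) : Prop :=
  π a = 2 ∧ π b = 2 ∧ ∃ r : Fin k, π r = 3 ∧ r < min a b ∧ max (p a) (p b) < p r

/-- Chained below: a sequence of strand-2 indices, consecutive pairs linked below. -/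
def ChainedBelow {k : ℕ} (p : Equiv.Perm (Fin k)) (π : Fin k → ℕ) (a b : Fin k) : Prop :=
  Relation.ReflTransGen (LinkedBelow p π) a b

/-- Chained above: a sequence of strand-2 indices, consecutive pairs linked above. -/
def ChainedAbove {k : ℕ} (p : Equiv.Perm (Fin k)) (π : Fin k → ℕ) (a b : Fin k) : Prop :=
  Relation.ReflTransGen (LinkedAbove p π) a b

/-- A corner of `(p, π)`. -/
def PatternCorner {k : ℕ} (p : Equiv.Perm (Fin k)) (π : Fin k → ℕ) (a b r : Fin k) : Prop :=
  π a = 2 ∧ π b = 2 ∧ a ≠ b ∧ (π r = 1 ∨ π r = 3) ∧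
  ((a < r ∧ r < b) ∨ (b < r ∧ r < a)) ∧
  ((p a < p r ∧ p r < p b) ∨ (p b < p r ∧ p r < p a))

/-- `(p, π)` has a tight corner. -/
def HasTightCorner {k : ℕ} (p : Equiv.Perm (Fin k)) (π : Fin k → ℕ) : Prop :=
  ∃ a b r : Fin k, PatternCorner p π a b r ∧ (ChainedBelow p π a b ∨ ChainedAbove p π a b)

/-- `w = u_t ∘ ṽ` where `u_t ∈ S̃ₙ^∘` has gap vector `(i·tᵢ + u̇⁰ᵢ)`. -/
def Represents {n : ℕ} (u0 : AffinePerm n) (v : Equiv.Perm (Fin n)) (t : Fin (n - 1) → ℕ)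
    (w : AffinePerm n) : Prop :=
  ∃ ut : AffinePerm n, ut.IsMLCR ∧
    (∀ i : Fin (n - 1), ut.gapVec (i.1 + 1) = (i.1 + 1) * t i + u0.gapVec (i.1 + 1)) ∧
    ∀ i : ℤ, w.toFun i = ut.toFun (periodicExt n v i)
/-- recovering the `t`-coordinates from window boundaries. -/
theorem stmt9 (n : ℕ) (hn : 2 ≤ n) (w u : AffinePerm n) (hw : w.IsMLCR)
    (hu : u.IsMLCR ∧ u.IsMinimal) (t : ℕ → ℕ)
    (ht : ∀ i : ℕ, 1 ≤ i → i ≤ n - 1 → w.gapVec i = i * t i + u.gapVec i)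
    (i : ℕ) (hi1 : 1 ≤ i) (hi2 : i ≤ n - 1)
    (j : ℕ) (hj : w.toFun ((i : ℤ) + (j : ℤ) * n) < w.toFun ((i : ℤ) + 1))
    (hjmax : ∀ j' : ℕ, w.toFun ((i : ℤ) + (j' : ℤ) * n) < w.toFun ((i : ℤ) + 1) → j' ≤ j) :
    t i = Set.ncard {q : ℤ | (i : ℤ) + 1 ≤ q * n ∧ q * n < (i : ℤ) + (j : ℤ) * n} := by
  have hn0 : 0 < n := by omega
  have hnpos : (0 : ℤ) < n := by exact_mod_cast hn0
  -- d and the value of j as a floor quotient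
  have hshift := w.shift_mul (i : ℤ) (j : ℤ)
  have hjn : (j : ℤ) * n < w.toFun ((i : ℤ) + 1) - w.toFun (i : ℤ) := by omega
  have hub : w.toFun ((i : ℤ) + 1) - w.toFun (i : ℤ) - 1 < ((j : ℤ) + 1) * n := by
    by_contra h
    push_neg at h
    have hs2 := w.shift_mul (i : ℤ) ((j : ℤ) + 1)
    have harg : w.toFun ((i : ℤ) + ((j : ℤ) + 1) * (n : ℤ)) < w.toFun ((i : ℤ) + 1) := by omega
    have := hjmax (j + 1) (by push_cast; push_cast at harg; exact harg)
    omega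
  have hJ : (w.toFun ((i : ℤ) + 1) - w.toFun (i : ℤ) - 1) / (n : ℤ) = (j : ℤ) := by
    have h1 : (j : ℤ) ≤ (w.toFun ((i : ℤ) + 1) - w.toFun (i : ℤ) - 1) / (n : ℤ) :=
      (Int.le_ediv_iff_mul_le hnpos).mpr (by omega)
    have h2 : (w.toFun ((i : ℤ) + 1) - w.toFun (i : ℤ) - 1) / (n : ℤ) < (j : ℤ) + 1 :=
      (Int.ediv_lt_iff_lt_mul hnpos).mpr (by omega)
    omega
  -- bounds for w
  obtain ⟨hlow, hup⟩ := w.gapVec_bounds hw hn i hi1 hi2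
  rw [hJ] at hlow hup
  -- bounds for u
  obtain ⟨_, huup⟩ := u.gapVec_bounds hu.1 hn i hi1 hi2
  have hiZn : (i : ℤ) ≤ (n : ℤ) - 1 := by omega
  have hdu := hu.2 (i : ℤ) (by exact_mod_cast hi1) hiZn
  have hJu : (u.toFun ((i : ℤ) + 1) - u.toFun (i : ℤ) - 1) / (n : ℤ) = 0 :=
    Int.ediv_eq_zero_of_lt (by omega) (by omega)
  rw [hJu, mul_zero, zero_add] at huup
  have huu : u.gapVec i < i := by exact_mod_cast huup
  -- conclude t i = j
  have hw_eq := ht i hi1 hi2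
  have h1 : i * j ≤ w.gapVec i := by exact_mod_cast hlow
  have h2 : w.gapVec i < i * j + i := by exact_mod_cast hup
  have e1 : w.gapVec i / i = t i := by
    rw [hw_eq, Nat.mul_add_div (by omega), Nat.div_eq_of_lt huu, add_zero]
  have e2 : w.gapVec i / i = j := by
    rw [show w.gapVec i = i * j + (w.gapVec i - i * j) by omega,
      Nat.mul_add_div (by omega), Nat.div_eq_of_lt (by omega), add_zero]
  have htj : t i = j := by rw [← e1, e2]
  -- the set on the right is Icc 1 j
  have hni : (i : ℤ) + 1 ≤ (n : ℤ) := by omega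
  have hsetR : {q : ℤ | (i : ℤ) + 1 ≤ q * n ∧ q * n < (i : ℤ) + (j : ℤ) * n}
      = ↑(Finset.Icc (1 : ℤ) (j : ℤ)) := by
    ext q
    simp only [Set.mem_setOf_eq, Finset.coe_Icc, Set.mem_Icc]
    constructor
    · rintro ⟨hq1, hq2⟩
      constructor
      · by_contra h
        push_neg at h
        have : q * (n : ℤ) ≤ 0 := mul_nonpos_of_nonpos_of_nonneg (by omega) hnpos.le
        omega
      · by_contra h
        push_neg at h
        have hm : ((j : ℤ) + 1) * n ≤ q * n := mul_le_mul_of_nonneg_right (by omega) hnpos.le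
        have hr : ((j : ℤ) + 1) * n = (j : ℤ) * n + n := by ring
        omega
    · rintro ⟨hq1, hq2⟩
      constructor
      · have hm : 1 * (n : ℤ) ≤ q * n := mul_le_mul_of_nonneg_right hq1 hnpos.le
        have hr : 1 * (n : ℤ) = n := one_mul _
        omega
      · have hm : q * (n : ℤ) ≤ (j : ℤ) * n := mul_le_mul_of_nonneg_right hq2 hnpos.le
        have hiZ : (1 : ℤ) ≤ (i : ℤ) := by exact_mod_cast hi1
        omega
  rw [hsetR, Set.ncard_coe_finset, Int.card_Icc]
  omega
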